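/- arXiv:2207.01675 — 2 statements merged into one kernel-verified Lean document; each statement's English description precedes it below -/
import Mathlib

section
/- Let N ≥ 1, 0 ≤ r ≤ N-1, and let y, x_1, ..., x_r be indeterminates. Define e_j = C(N,j) + (-1)^{j-1} q · [z^{N+1-j}]((y+z)(1+z x_1)···(1+z x_r)) as polynomials in q over ℚ(y, x_1,...,x_r), for 0 ≤ j ≤ N+1 and e_j = 0 otherwise. For integers 0 ≤ k ≤ d, let λ_k = (d^N, k) and let s_{λ_k} be defined by the Jacobi–Trudi determinant in the e_j as above. Then [q^d] s_{λ_k} = (-1)^{(N-1)d} (-y)^k · [t^{d-k}] (1/((1-t)(1-x_1 y t)···(1-x_r y t))). -/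
/- STATEMENT 1: For `N ≥ 1`, `0 ≤ r ≤ N-1`, indeterminates `y, x_1, …, x_r`, and
`e_j = C(N,j) + (-1)^(j-1) q [z^(N+1-j)]((y+z)∏(1+z x_p))` over `ℚ(y,x_1,…,x_r)`,
the Jacobi–Trudi determinant `s_{λ_k}` for `λ_k = (d^N, k)`, `0 ≤ k ≤ d`, satisfies
`[q^d] s_{λ_k} = (-1)^((N-1)d) (-y)^k [t^(d-k)] 1/((1-t)∏(1-x_p y t))`. -/

open Polynomial

/-- The field `ℚ(y, x_1, …, x_r)`: variable `0` is `y`, variable `p.succ` is `x_p`. -/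
noncomputable abbrev KF (r : ℕ) : Type := FractionRing (MvPolynomial (Fin (r + 1)) ℚ)

noncomputable def yv (r : ℕ) : KF r :=
  algebraMap (MvPolynomial (Fin (r + 1)) ℚ) (KF r) (MvPolynomial.X 0)

noncomputable def xv (r : ℕ) (p : Fin r) : KF r :=
  algebraMap (MvPolynomial (Fin (r + 1)) ℚ) (KF r) (MvPolynomial.X p.succ)

/-- The polynomial `(y+z)(1+z x_1)⋯(1+z x_r)` in the variable `z`. -/
noncomputable def Pz (r : ℕ) : Polynomial (KF r) :=
  (Polynomial.C (yv r) + Polynomial.X) *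
    ∏ p : Fin r, (1 + Polynomial.C (xv r p) * Polynomial.X)

/-- `e_j = C(N,j) + (-1)^(j-1) q ⬝ [z^(N+1-j)]((y+z)∏(1+z x_p))`, a polynomial in `q`,
for `0 ≤ j ≤ N+1`, and `e_j = 0` otherwise. -/
noncomputable def elemE (N r : ℕ) (j : ℤ) : Polynomial (KF r) :=
  if 0 ≤ j ∧ j ≤ (N : ℤ) + 1 then
    Polynomial.C ((N.choose j.toNat : ℚ) : KF r) +
      Polynomial.C ((-1 : KF r) ^ (j + 1).toNat * (Pz r).coeff (N + 1 - j.toNat)) *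
        Polynomial.X
  else 0

/-- The conjugate partition `λ'_k = ((N+1)^k, N^(d-k))`, one-indexed. -/
def conjPart (N k : ℕ) (i : ℕ) : ℤ := if i ≤ k then (N : ℤ) + 1 else (N : ℤ)

/-! The `q`-coefficient of `e_j` is `(-1)^N [z^(N+1-j)] f` with `f(z) = P(-z)`,
`P(z) = (y+z)∏(1+x_p z)`; as `deg P ≤ r+1 ≤ N` this also holds for `j < 0`. Hence `[q^d] s_{λ_k}`
is `(-1)^(Nd)` times the minor of the `(d+1) × (d+1)` lower triangular Toeplitz matrix `T f`
obtained by deleting row `k` and the last column, i.e. `±` a cofactor of `T f`. Since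
`(T f)⁻¹ = T (f⁻¹)`, the adjugate formula gives this cofactor as `y^(d+1) [z^(d-k)] f⁻¹`, and
`f(yt) = y (1-t)∏(1-x_p y t)` turns it into the claimed coefficient. -/

section

open PowerSeries

variable {R : Type*}

noncomputable def lowerToeplitz [Semiring R] (f : R⟦X⟧) (n : ℕ) : Matrix (Fin n) (Fin n) R :=
  Matrix.of fun i j => if j ≤ i then coeff ((i : ℕ) - j) f else 0

theorem lowerToeplitz_mul [Semiring R] (f g : R⟦X⟧) (n : ℕ) :
    lowerToeplitz (f * g) n = lowerToeplitz f n * lowerToeplitz g n := by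
  ext i j
  simp only [lowerToeplitz, Matrix.mul_apply, Matrix.of_apply, mul_ite, ite_mul, zero_mul,
    mul_zero]
  split_ifs with hji
  · rw [PowerSeries.coeff_mul, ← Finset.sum_filter, ← Finset.sum_filter, Finset.filter_filter]
    symm
    refine Finset.sum_bij' (fun l _ => ((i : ℕ) - l, (l : ℕ) - j))
      (fun p hp => ⟨p.2 + j, by simp at hp; omega⟩) ?_ ?_ ?_ ?_ ?_
    all_goals
      intro a ha
      simp only [Finset.mem_filter, Finset.mem_univ, true_and,
        Finset.HasAntidiagonal.mem_antidiagonal, Fin.le_def, Fin.ext_iff, Prod.ext_iff] at hji ha ⊢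
    all_goals omega
  · refine (Finset.sum_eq_zero fun l _ => ?_).symm
    split_ifs <;> first | rfl | (exfalso; exact hji (le_trans ‹_› ‹_›))

theorem lowerToeplitz_one [Semiring R] (n : ℕ) : lowerToeplitz (1 : R⟦X⟧) n = 1 := by
  ext i j
  simp only [lowerToeplitz, Matrix.of_apply, PowerSeries.coeff_one, Matrix.one_apply,
    Fin.ext_iff, Fin.le_def]
  split_ifs <;> first | rfl | omega

theorem det_lowerToeplitz [CommRing R] (f : R⟦X⟧) (n : ℕ) :
    (lowerToeplitz f n).det = constantCoeff f ^ n := by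
  rw [Matrix.det_of_isLowerTriangular]
  · simp [lowerToeplitz]
  · exact fun i j hij => if_neg (not_le.mpr hij)

theorem det_lowerToeplitz_submatrix_succAbove [CommRing R] {f g : R⟦X⟧} (hfg : f * g = 1)
    (d : ℕ) (k : Fin (d + 1)) :
    ((lowerToeplitz f (d + 1)).submatrix k.succAbove (Fin.last d).succAbove).det
      = (-1) ^ (d + k : ℕ) * constantCoeff f ^ (d + 1) * coeff (d - k) g := by
  set T := lowerToeplitz f (d + 1)
  have hadj : T.adjugate = T.det • lowerToeplitz g (d + 1) := by
    calc T.adjugate = T.adjugate * (T * lowerToeplitz g (d + 1)) := by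
          rw [← lowerToeplitz_mul, hfg, lowerToeplitz_one, Matrix.mul_one]
      _ = T.det • lowerToeplitz g (d + 1) := by
          rw [← Matrix.mul_assoc, Matrix.adjugate_mul, smul_one_mul]
  have hentry := congrFun (congrFun hadj (Fin.last d)) k
  rw [Matrix.adjugate_fin_succ_eq_det_submatrix, Matrix.smul_apply, det_lowerToeplitz,
    lowerToeplitz, Matrix.of_apply, if_pos k.le_last, Fin.val_last, smul_eq_mul] at hentry
  have hsign : ((-1 : R) ^ (d + k : ℕ)) ^ 2 = 1 := by
    rw [← pow_mul, mul_comm, pow_mul, neg_one_sq, one_pow]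
  linear_combination (-1 : R) ^ (d + k : ℕ) * hentry
    - (T.submatrix k.succAbove (Fin.last d).succAbove).det * hsign

theorem PowerSeries.rescale_C [CommSemiring R] (a c : R) : rescale a (C c) = C c := by
  ext n
  rw [coeff_rescale, coeff_C]
  split_ifs with h <;> simp [h]

end

theorem Polynomial.coeff_det_of_natDegree_le_one {R n : Type*} [CommRing R] [Fintype n]
    [DecidableEq n] (M : Matrix n n R[X]) (hM : ∀ i j, (M i j).natDegree ≤ 1) :
    M.det.coeff (Fintype.card n) = (M.map (coeff · 1)).det := by
  have hlin : M = (X : R[X]) • (M.map (coeff · 1)).map C + (M.map (coeff · 0)).map C := by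
    ext1 i j
    simpa [mul_comm X] using eq_X_add_C_of_natDegree_le_one (hM i j)
  conv_lhs => rw [hlin]
  exact coeff_det_X_add_C_card _ _

noncomputable def jacobiTrudi (N r d k : ℕ) : Matrix (Fin d) (Fin d) (KF r)[X] :=
  Matrix.of fun i j => elemE N r (conjPart N k ((i : ℕ) + 1) - ((i : ℕ) + 1) + ((j : ℕ) + 1))

noncomputable def denomSeries (r : ℕ) : PowerSeries (KF r) :=
  (1 - PowerSeries.X) * ∏ p : Fin r, (1 - PowerSeries.C (xv r p * yv r) * PowerSeries.X)

theorem yv_ne_zero (r : ℕ) : yv r ≠ 0 :=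
  fun h => MvPolynomial.X_ne_zero 0 (IsFractionRing.to_map_eq_zero_iff.mp h)

theorem natDegree_Pz_le (r : ℕ) : (Pz r).natDegree ≤ r + 1 := by
  have hprod : (∏ p : Fin r, (1 + C (xv r p) * X)).natDegree ≤ r := by
    refine (natDegree_prod_le _ _).trans ?_
    refine (Finset.sum_le_card_nsmul _ _ 1 fun p _ => ?_).trans (by simp)
    compute_degree
  have hlin : (C (yv r) + X).natDegree ≤ 1 := by compute_degree
  exact natDegree_mul_le.trans (by omega)

theorem natDegree_elemE_le (N r : ℕ) (J : ℤ) : (elemE N r J).natDegree ≤ 1 := by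
  unfold elemE
  split_ifs
  · compute_degree
  · simp

theorem elemE_eq_zero_of_lt {N r : ℕ} {J : ℤ} (hJ : (N : ℤ) + 1 < J) : elemE N r J = 0 :=
  if_neg fun h => hJ.not_ge h.2

theorem coeff_one_elemE {N r : ℕ} (hr : r < N) (n : ℕ) :
    (elemE N r (N + 1 - n)).coeff 1 = (-1) ^ N * ((-1) ^ n * (Pz r).coeff n) := by
  unfold elemE
  split_ifs with h
  · have h1 : ((N : ℤ) + 1 - n).toNat = N + 1 - n := by omega
    have h2 : ((N : ℤ) + 1 - n + 1).toNat = N + 2 - n := by omega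
    have hsign : (-1 : KF r) ^ (N + 2 - n) = (-1) ^ N * (-1) ^ n := by
      rw [← pow_add, neg_one_pow_eq_pow_mod_two, neg_one_pow_eq_pow_mod_two (n := N + n)]
      congr 1
      omega
    rw [h1, h2, Nat.sub_sub_self (by omega), coeff_add, coeff_C_mul_X, coeff_C, hsign]
    simp [mul_assoc]
  · rw [coeff_eq_zero_of_natDegree_lt ((natDegree_Pz_le r).trans_lt (by omega))]
    simp

theorem jacobiTrudi_map_coeff_one {N r d k : ℕ} (hr : r < N) (hk : k ≤ d) :
    (jacobiTrudi N r d k).map (coeff · 1) = (-1 : KF r) ^ N •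
      (lowerToeplitz (PowerSeries.rescale (-1) (Pz r : PowerSeries (KF r))) (d + 1)).submatrix
        (Fin.succAbove ⟨k, Nat.lt_succ_of_le hk⟩) (Fin.last d).succAbove := by
  ext i j
  set s : ℕ := ((⟨k, Nat.lt_succ_of_le hk⟩ : Fin (d + 1)).succAbove i : ℕ) with hs
  have hidx : conjPart N k ((i : ℕ) + 1) - ((i : ℕ) + 1) + ((j : ℕ) + 1)
      = (N : ℤ) + 1 - s + j := by
    simp only [hs, conjPart, Fin.succAbove, Fin.lt_def]
    split_ifs <;> simp_all <;> omega
  simp only [jacobiTrudi, Matrix.map_apply, Matrix.of_apply, Matrix.smul_apply,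
    Matrix.submatrix_apply, lowerToeplitz, hidx, Fin.succAbove_last, Fin.le_def,
    Fin.val_castSucc, ← hs]
  split_ifs with hjs
  · rw [show (N : ℤ) + 1 - s + j = N + 1 - ((s - j : ℕ) : ℤ) by omega, coeff_one_elemE hr,
      PowerSeries.coeff_rescale, coeff_coe, smul_eq_mul]
  · rw [elemE_eq_zero_of_lt (by omega), coeff_zero, smul_zero]

theorem rescale_neg_yv_Pz (r : ℕ) :
    PowerSeries.rescale (-yv r) (Pz r : PowerSeries (KF r)) =
      PowerSeries.C (yv r) * denomSeries r := by
  rw [Pz, denomSeries, ← coeToPowerSeries.ringHom_apply, map_mul, map_prod, map_mul, map_prod]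
  simp only [coeToPowerSeries.ringHom_apply, coe_C, coe_X, map_add, map_one, map_mul, map_neg,
    PowerSeries.rescale_C, PowerSeries.rescale_X]
  ring_nf

theorem rescale_neg_one_Pz (r : ℕ) :
    PowerSeries.rescale (-1) (Pz r : PowerSeries (KF r)) =
      PowerSeries.C (yv r) * PowerSeries.rescale (yv r)⁻¹ (denomSeries r) := by
  rw [← PowerSeries.rescale_C (yv r)⁻¹ (yv r), ← map_mul, ← rescale_neg_yv_Pz,
    PowerSeries.rescale_rescale, neg_mul, mul_inv_cancel₀ (yv_ne_zero r)]

theorem rescale_neg_one_Pz_mul_eq_one (r : ℕ) :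
    PowerSeries.rescale (-1) (Pz r : PowerSeries (KF r)) *
      (PowerSeries.C (yv r)⁻¹ * PowerSeries.rescale (yv r)⁻¹ (denomSeries r)⁻¹) = 1 := by
  have hG : PowerSeries.constantCoeff (denomSeries r) = 1 := by simp [denomSeries, map_prod]
  rw [rescale_neg_one_Pz]
  calc _ = PowerSeries.C (yv r * (yv r)⁻¹) *
        PowerSeries.rescale (yv r)⁻¹ (denomSeries r * (denomSeries r)⁻¹) := by
        rw [map_mul PowerSeries.C, map_mul (PowerSeries.rescale _)]
        ring
    _ = 1 := by
        rw [mul_inv_cancel₀ (yv_ne_zero r), PowerSeries.mul_inv_cancel _ (by simp [hG]),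
          map_one, map_one, one_mul]

theorem constantCoeff_rescale_neg_one_Pz (r : ℕ) :
    PowerSeries.constantCoeff (PowerSeries.rescale (-1) (Pz r : PowerSeries (KF r))) = yv r := by
  rw [← PowerSeries.coeff_zero_eq_constantCoeff_apply, PowerSeries.coeff_rescale, pow_zero,
    one_mul, coeff_coe, coeff_zero_eq_eval_zero]
  simp [Pz, eval_prod]

theorem coeff_qd_jacobiTrudi_schur_multi (N r d k : ℕ) (hN : 1 ≤ N) (hr : r ≤ N - 1)
    (hk : k ≤ d) :
    (Matrix.det (Matrix.of fun i j : Fin d =>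
        elemE N r (conjPart N k ((i : ℕ) + 1) - ((i : ℕ) + 1) + ((j : ℕ) + 1)))).coeff d
      = (-1) ^ ((N - 1) * d) * (-(yv r)) ^ k *
        PowerSeries.coeff (R := KF r) (d - k)
          (((1 - PowerSeries.X) *
            ∏ p : Fin r, (1 - PowerSeries.C (R := KF r) (xv r p * yv r) * PowerSeries.X))⁻¹) := by
  change (jacobiTrudi N r d k).det.coeff d
    = _ * _ * PowerSeries.coeff (d - k) (denomSeries r)⁻¹
  have hcoeff := coeff_det_of_natDegree_le_one (jacobiTrudi N r d k)
    fun i j => natDegree_elemE_le N r _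
  rw [Fintype.card_fin] at hcoeff
  rw [hcoeff, jacobiTrudi_map_coeff_one (by omega) hk, Matrix.det_smul, Fintype.card_fin,
    det_lowerToeplitz_submatrix_succAbove (rescale_neg_one_Pz_mul_eq_one r),
    constantCoeff_rescale_neg_one_Pz, PowerSeries.coeff_C_mul, PowerSeries.coeff_rescale]
  obtain ⟨m, rfl⟩ : ∃ m, d = k + m := ⟨d - k, by omega⟩
  obtain ⟨n, rfl⟩ : ∃ n, N = n + 1 := ⟨N - 1, by omega⟩
  have hsign : ((-1 : KF r) ^ (n + 1)) ^ (k + m) * (-1) ^ (k + m + k)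
      = (-1) ^ (n * (k + m)) * (-1) ^ k := by
    rw [← pow_mul, ← pow_add, show (n + 1) * (k + m) + (k + m + k)
      = n * (k + m) + k + 2 * (k + m) by ring, pow_add, pow_mul, neg_one_sq, one_pow, mul_one,
      pow_add]
  have hpow : yv r ^ (k + m + 1) * (yv r)⁻¹ * (yv r)⁻¹ ^ m = yv r ^ k := by
    rw [inv_pow]
    field_simp [yv_ne_zero r]
    ring
  simp only [Nat.add_sub_cancel_left, Nat.add_sub_cancel, neg_pow (yv r)]
  linear_combination PowerSeries.coeff m (denomSeries r)⁻¹ *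
    (yv r ^ k * hsign + ((-1 : KF r) ^ (n + 1)) ^ (k + m) * (-1) ^ (k + m + k) * hpow)
end

section
/- For all integers u, d ≥ 0, and an indeterminate y, the polynomial identity Σ_{k=0}^{d} C(u,k) C(-u+d, d-k) (1-y)^k = Σ_{k=0}^{d} C(u,k) (-y)^k holds in ℚ[y]. -/
/- STATEMENT 5: For integers `u` and `d ≥ 0`, in `ℚ[y]`:
`Σ_{k=0}^d C(u,k) C(-u+d, d-k) (1-y)^k = Σ_{k=0}^d C(u,k) (-y)^k`. -/

/-- Generalized binomial coefficient `C(a,k) ∈ ℚ`. -/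
noncomputable def gchoose (a : ℤ) (k : ℕ) : ℚ :=
  (∏ i ∈ Finset.range k, ((a : ℚ) - (i : ℚ))) / (k.factorial : ℚ)

/-!
Expanding `(1 - y)^k = Σ_m C(k,m) (-y)^m`, the coefficient of `(-y)^m` on the left is
`Σ_k C(k,m) C(u,k) C(d-u, d-k)`. Trinomial revision `C(k,m) C(u,k) = C(u,m) C(u-m, k-m)` turns
it into `C(u,m) Σ_j C(u-m, j) C(d-u, d-m-j)`, and by Chu–Vandermonde the last sum is
`C(d-m, d-m) = 1`. Both steps hold in any binomial ring, where `Ring.choose` is the generalized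
binomial coefficient.
-/

open Finset Polynomial

theorem gchoose_eq_choose (a : ℤ) (k : ℕ) : gchoose a k = Ring.choose (a : ℚ) k := by
  rw [Ring.choose_eq_smul, ← aeval_eq_smeval, ← eval_map_algebraMap, descPochhammer_map,
    descPochhammer_eval_eq_prod_range, gchoose, smul_eq_mul, inv_mul_eq_div]

theorem add_one_pow_eq_sum_range_of_le {A : Type*} [Semiring A] (x : A) {k d : ℕ}
    (hkd : k ≤ d) :
    (x + 1) ^ k = ∑ m ∈ range (d + 1), k.choose m • x ^ m := by
  calc (x + 1) ^ k = ∑ m ∈ range (k + 1), k.choose m • x ^ m := by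
        rw [(Commute.one_right x).add_pow]
        refine sum_congr rfl fun m _ => ?_
        rw [one_pow, mul_one, nsmul_eq_mul, Nat.cast_comm]
    _ = ∑ m ∈ range (d + 1), k.choose m • x ^ m := by
        refine sum_subset (range_subset_range.mpr (by omega)) fun m _ hm => ?_
        rw [Nat.choose_eq_zero_of_lt (by simpa using hm), zero_smul]

namespace Ring

variable {R : Type*} [Ring R] [BinomialRing R]

theorem sum_range_choose_smul_choose_mul_choose {r s : R} (h : Commute r s) {n d : ℕ}
    (hnd : n ≤ d) :
    ∑ k ∈ range (d + 1), k.choose n • (choose r k * choose s (d - k)) =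
      choose r n * choose (r - n + s) (d - n) := by
  have htail : ∀ j, (n + j).choose n • (choose r (n + j) * choose s (d - (n + j))) =
      choose r n * (choose (r - n) j * choose s (d - n - j)) := by
    intro j
    rw [← smul_mul_assoc, choose_smul_choose r (Nat.le_add_right n j), Nat.add_sub_cancel_left,
      mul_assoc, Nat.sub_sub]
  rw [show d + 1 = n + (d - n + 1) by omega, sum_range_add, sum_eq_zero, zero_add]
  · simp only [htail, ← mul_sum]
    rw [add_choose_eq _ (h.sub_left (Nat.cast_commute n s)),
      Nat.sum_antidiagonal_eq_sum_range_succ_mk]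
  · intro k hk
    rw [Nat.choose_eq_zero_of_lt (mem_range.mp hk), zero_smul]

theorem sum_range_choose_smul_choose_mul_choose_neg_add (r : R) {n d : ℕ} (hnd : n ≤ d) :
    ∑ k ∈ range (d + 1), k.choose n • (choose r k * choose (-r + d) (d - k)) =
      choose r n := by
  have hsum : r - n + (-r + d) = ((d - n : ℕ) : R) := by
    rw [Nat.cast_sub hnd]; abel
  have hcomm : Commute r (-r + d) :=
    (Commute.refl r).neg_right.add_right (Nat.cast_commute d r).symm
  rw [sum_range_choose_smul_choose_mul_choose hcomm hnd, hsum, choose_natCast, Nat.choose_self,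
    Nat.cast_one, mul_one]

theorem sum_range_choose_mul_choose_neg_add_smul_add_one_pow {A : Type*} [Semiring A]
    [Module R A] (r : R) (d : ℕ) (x : A) :
    ∑ k ∈ range (d + 1), (choose r k * choose (-r + d) (d - k)) • (x + 1) ^ k =
      ∑ k ∈ range (d + 1), choose r k • x ^ k := by
  calc ∑ k ∈ range (d + 1), (choose r k * choose (-r + d) (d - k)) • (x + 1) ^ k
      = ∑ k ∈ range (d + 1), ∑ m ∈ range (d + 1),
          (k.choose m • (choose r k * choose (-r + d) (d - k))) • x ^ m := by
        refine sum_congr rfl fun k hk => ?_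
        rw [add_one_pow_eq_sum_range_of_le x (mem_range_succ_iff.mp hk), smul_sum]
        simp only [smul_assoc, smul_comm _ (_ : ℕ)]
    _ = ∑ m ∈ range (d + 1), (∑ k ∈ range (d + 1),
          k.choose m • (choose r k * choose (-r + d) (d - k))) • x ^ m := by
        rw [sum_comm]
        simp only [sum_smul]
    _ = ∑ k ∈ range (d + 1), choose r k • x ^ k := by
        refine sum_congr rfl fun m hm => ?_
        rw [sum_range_choose_smul_choose_mul_choose_neg_add r (mem_range_succ_iff.mp hm)]

end Ring

theorem binomial_poly_identity (u : ℤ) (d : ℕ) :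
    ∑ k ∈ Finset.range (d + 1),
        Polynomial.C (gchoose u k * gchoose (-u + d) (d - k)) * (1 - Polynomial.X) ^ k
      = ∑ k ∈ Finset.range (d + 1),
          Polynomial.C (gchoose u k) * (-(Polynomial.X : Polynomial ℚ)) ^ k := by
  have hcast : ((-u + d : ℤ) : ℚ) = -(u : ℚ) + d := by push_cast; rfl
  simp only [gchoose_eq_choose, hcast, C_mul', sub_eq_neg_add]
  exact Ring.sum_range_choose_mul_choose_neg_add_smul_add_one_pow (u : ℚ) d (-X)
end
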